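/- Let α ∈ (0,1/2), β ∈ (α,1), t > 0, M > 0, and let c : [0,t] × ℝ → ℝ satisfy |c(s,x)| ≤ M(1+|x|) and |c(s,x) − c(u,y)| ≤ M(|s−u|^β + |x−y|) for all s,u ∈ [0,t], x,y ∈ ℝ. Let g : [0,t] → ℝ be continuous with Λ := ‖g‖_{0;[0,t]} < ∞, and let X : [0,t] → ℝ be measurable with ∫_0^t ( |X_s| s^{−α} + ‖X‖_s ) ds < ∞. Then the generalized Lebesgue–Stieltjes integral ∫_0^t c(s,X_s) dg(s) is well defined and there is a constant C, depending only on α, β, M and t, such that |∫_0^t c(s,X_s) dg(s)| ≤ C Λ ( 1 + ∫_0^t ( |X_s| s^{−α} + ‖X‖_s ) ds ). -/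

import Mathlib

open MeasureTheory Set
open scoped ENNReal

/-- The seminorm `‖g‖_{0;[a,b]}`, valued in `ℝ≥0∞`. -/
noncomputable def zeroNorm (α a b : ℝ) (g : ℝ → ℝ) : ℝ≥0∞ :=
  ⨆ (u : ℝ) (v : ℝ) (_ : a ≤ u) (_ : u < v) (_ : v < b),
    ENNReal.ofReal (|g v - g u| / (v - u) ^ (1 - α)
      + ∫ z in Ioo u v, |g u - g z| / (z - u) ^ (2 - α))

/-- Left-sided fractional derivative `(D^α_{a+} f)(x)`. -/
noncomputable def fracDerivP (α a : ℝ) (f : ℝ → ℝ) (x : ℝ) : ℝ :=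
  (1 / Real.Gamma (1 - α)) *
    (f x / (x - a) ^ α + α * ∫ u in Ioo a x, (f x - f u) / (x - u) ^ (1 + α))

/-- Right-sided fractional derivative `(D^{1-α}_{b-} g_{b-})(x)`. -/
noncomputable def fracDerivM (α b : ℝ) (g : ℝ → ℝ) (x : ℝ) : ℝ :=
  (1 / Real.Gamma α) *
    ((g x - g b) / (b - x) ^ (1 - α) + (1 - α) * ∫ u in Ioo x b, (g x - g u) / (u - x) ^ (2 - α))

/-- Generalized (fractional) Lebesgue–Stieltjes integral `∫_a^b f dg`. -/
noncomputable def glsIntegral (α a b : ℝ) (f g : ℝ → ℝ) : ℝ :=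
  ∫ x in Ioo a b, fracDerivP α a f x * fracDerivM α b g x

/-- `‖X‖_s = ∫_0^s |X_s - X_u| (s-u)^{-1-α} du`, valued in `ℝ≥0∞`. -/
noncomputable def pathNorm (α : ℝ) (X : ℝ → ℝ) (s : ℝ) : ℝ≥0∞ :=
  ∫⁻ u in Ioo (0 : ℝ) s, ENNReal.ofReal (|X s - X u| * (s - u) ^ (-1 - α))

/-!
Both fractional derivatives are estimated pointwise on `(0, t)`. The right one is at most
`2 Λ / Γ(α)`: its boundary term by the Hölder part of `‖g‖_{0;[0,t]}`, carried to the endpoint `t`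
by continuity of `g`, and its integral term as a limit of the integral parts of `‖g‖_{0;[0,t]}`
over `(x, v)`, `v ↑ t`. The growth and Hölder bounds on `c` dominate the left derivative of
`s ↦ c(s, X_s)` by `M / Γ(1-α) · (x^{-α} + x^{β-α} / (β-α) + |X_x| x^{-α} + ‖X‖_x)`, whose integral
over `(0, t)` is explicit. Measurability of the product comes from replacing `c` and `g` by their
extensions that are constant in time outside `[0, t]`.
-/

lemma setIntegral_Ioo_le_of_forall_lt {f : ℝ → ℝ} {a b C : ℝ} (hC : 0 ≤ C)
    (h : ∀ v ∈ Ioo a b, ∫ x in Ioo a v, f x ≤ C) : ∫ x in Ioo a b, f x ≤ C := by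
  by_cases hf : IntegrableOn f (Ioo a b)
  swap
  · rwa [integral_undef hf]
  rcases le_or_gt b a with hba | hab
  · rwa [Ioo_eq_empty (not_lt.2 hba), setIntegral_empty]
  have hprim : ∀ v ∈ Icc a b, ∫ x in a..v, f x = ∫ x in Ioo a v, f x := fun v hv => by
    rw [intervalIntegral.integral_of_le hv.1, integral_Ioc_eq_integral_Ioo]
  have hcont : ContinuousOn (fun v => ∫ x in a..v, f x) (Icc a b) := by
    simpa only [uIcc_of_le hab.le] using intervalIntegral.continuousOn_primitive_interval'
      ((intervalIntegrable_iff_integrableOn_Ioo_of_le hab.le).2 hf) left_mem_uIcc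
  rw [← hprim b (right_mem_Icc.2 hab.le)]
  refine ContinuousWithinAt.closure_le (s := Ioo a b) ?_
    ((hcont b (right_mem_Icc.2 hab.le)).mono Ioo_subset_Icc_self) continuousWithinAt_const
    fun v hv => (hprim v (Ioo_subset_Icc_self hv)).trans_le (h v hv)
  rw [closure_Ioo hab.ne]
  exact right_mem_Icc.2 hab.le

lemma integral_Ioo_rpow {s t : ℝ} (hs : -1 < s) (ht : 0 ≤ t) :
    ∫ x in Ioo 0 t, x ^ s = t ^ (s + 1) / (s + 1) := by
  rw [← integral_Ioc_eq_integral_Ioo, ← intervalIntegral.integral_of_le ht,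
    integral_rpow (Or.inl hs), Real.zero_rpow (by linarith), sub_zero]

lemma integrableOn_Ioo_sub_rpow {s x : ℝ} (hs : -1 < s) (hx : 0 ≤ x) :
    IntegrableOn (fun u => (x - u) ^ s) (Ioo 0 x) := by
  rw [← intervalIntegrable_iff_integrableOn_Ioo_of_le hx]
  simpa using
    ((intervalIntegral.intervalIntegrable_rpow' hs (a := 0) (b := x)).comp_sub_left x).symm

lemma integral_Ioo_sub_rpow {s x : ℝ} (hs : -1 < s) (hx : 0 ≤ x) :
    ∫ u in Ioo 0 x, (x - u) ^ s = x ^ (s + 1) / (s + 1) := by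
  rw [← integral_Ioc_eq_integral_Ioo, ← intervalIntegral.integral_of_le hx,
    intervalIntegral.integral_comp_sub_left (fun v => v ^ s), sub_self, sub_zero,
    intervalIntegral.integral_of_le hx, integral_Ioc_eq_integral_Ioo, integral_Ioo_rpow hs hx]

lemma integrable_mul_and_abs_integral_le {Ω : Type*} [MeasurableSpace Ω] {μ : Measure Ω}
    {P Q φ : Ω → ℝ} {B : ℝ} (hPQ : AEStronglyMeasurable (fun x => P x * Q x) μ)
    (hφ : Integrable φ μ) (hP : ∀ᵐ x ∂μ, |P x| ≤ φ x) (hQ : ∀ᵐ x ∂μ, |Q x| ≤ B) :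
    Integrable (fun x => P x * Q x) μ ∧ |∫ x, P x * Q x ∂μ| ≤ B * ∫ x, φ x ∂μ := by
  have hbound : ∀ᵐ x ∂μ, ‖P x * Q x‖ ≤ φ x * B := by
    filter_upwards [hP, hQ] with x hPx hQx
    rw [Real.norm_eq_abs, abs_mul]
    exact mul_le_mul hPx hQx (abs_nonneg _) ((abs_nonneg _).trans hPx)
  refine ⟨(hφ.mul_const B).mono' hPQ hbound, ?_⟩
  rw [mul_comm, ← integral_mul_const]
  exact norm_integral_le_of_norm_le (hφ.mul_const B) hbound

lemma measurable_setIntegral_Ioo {a b : ℝ → ℝ} (ha : Measurable a) (hb : Measurable b)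
    {F : ℝ → ℝ → ℝ} (hF : Measurable (Function.uncurry F)) :
    Measurable fun x => ∫ u in Ioo (a x) (b x), F x u := by
  have hset : MeasurableSet {p : ℝ × ℝ | a p.1 < p.2 ∧ p.2 < b p.1} :=
    (measurableSet_lt (ha.comp measurable_fst) measurable_snd).inter
      (measurableSet_lt measurable_snd (hb.comp measurable_fst))
  convert ((hF.indicator hset).stronglyMeasurable.integral_prod_right' (ν := volume)).measurable
    using 1
  funext x
  rw [← integral_indicator measurableSet_Ioo]
  rfl

lemma continuousOn_uncurry_of_abs_sub_le {c : ℝ → ℝ → ℝ} {S : Set ℝ} {β M : ℝ} (hβ : 0 < β)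
    (hc : ∀ s ∈ S, ∀ u ∈ S, ∀ x y : ℝ, |c s x - c u y| ≤ M * (|s - u| ^ β + |x - y|)) :
    ContinuousOn (Function.uncurry c) (S ×ˢ univ) := by
  intro p₀ hp₀
  rw [ContinuousWithinAt, tendsto_iff_dist_tendsto_zero]
  have hmod : Continuous fun p : ℝ × ℝ => M * (|p.1 - p₀.1| ^ β + |p.2 - p₀.2|) := by
    fun_prop (disch := exact hβ.le)
  refine squeeze_zero' (Filter.Eventually.of_forall fun _ => dist_nonneg)
    (eventually_nhdsWithin_of_forall fun p hp => hc _ hp.1 _ hp₀.1 _ _) ?_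
  simpa [Real.zero_rpow hβ.ne'] using (hmod.continuousWithinAt (s := S ×ˢ univ) (x := p₀)).tendsto

section ZeroNorm

variable {α a b : ℝ} {g : ℝ → ℝ}

lemma ofReal_le_zeroNorm {u v : ℝ} (hu : a ≤ u) (huv : u < v) (hvb : v < b) :
    ENNReal.ofReal (|g v - g u| / (v - u) ^ (1 - α)
      + ∫ z in Ioo u v, |g u - g z| / (z - u) ^ (2 - α)) ≤ zeroNorm α a b g :=
  le_iSup_of_le u <| le_iSup_of_le v <| le_iSup_of_le hu <| le_iSup_of_le huv <|
    le_iSup_of_le hvb le_rfl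

lemma add_le_zeroNorm_toReal (hg : zeroNorm α a b g ≠ ⊤) {u v : ℝ} (hu : a ≤ u) (huv : u < v)
    (hvb : v < b) :
    |g v - g u| / (v - u) ^ (1 - α) + ∫ z in Ioo u v, |g u - g z| / (z - u) ^ (2 - α)
      ≤ (zeroNorm α a b g).toReal :=
  (ENNReal.ofReal_le_iff_le_toReal hg).1 (ofReal_le_zeroNorm hu huv hvb)

lemma abs_sub_le_zeroNorm_mul_rpow (hg : zeroNorm α a b g ≠ ⊤) {u v : ℝ} (hu : a ≤ u)
    (huv : u < v) (hvb : v < b) :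
    |g v - g u| ≤ (zeroNorm α a b g).toReal * (v - u) ^ (1 - α) := by
  have hint : 0 ≤ ∫ z in Ioo u v, |g u - g z| / (z - u) ^ (2 - α) :=
    setIntegral_nonneg measurableSet_Ioo fun z hz =>
      div_nonneg (abs_nonneg _) (Real.rpow_nonneg (sub_pos.2 hz.1).le _)
  rw [← div_le_iff₀ (Real.rpow_pos_of_pos (sub_pos.2 huv) _)]
  linarith [add_le_zeroNorm_toReal hg hu huv hvb]

lemma setIntegral_le_zeroNorm (hg : zeroNorm α a b g ≠ ⊤) {u v : ℝ} (hu : a ≤ u) (huv : u < v)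
    (hvb : v < b) :
    ∫ z in Ioo u v, |g u - g z| / (z - u) ^ (2 - α) ≤ (zeroNorm α a b g).toReal := by
  have : 0 ≤ |g v - g u| / (v - u) ^ (1 - α) :=
    div_nonneg (abs_nonneg _) (Real.rpow_nonneg (sub_pos.2 huv).le _)
  linarith [add_le_zeroNorm_toReal hg hu huv hvb]

lemma abs_sub_right_le_zeroNorm_mul_rpow (hg : zeroNorm α a b g ≠ ⊤)
    (hgb : ContinuousWithinAt g (Icc a b) b) {u : ℝ} (hu : a ≤ u) (hub : u < b) :
    |g b - g u| ≤ (zeroNorm α a b g).toReal * (b - u) ^ (1 - α) := by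
  have hsub : Ioo u b ⊆ Icc a b := Ioo_subset_Icc_self.trans (Icc_subset_Icc_left hu)
  refine ContinuousWithinAt.closure_le (s := Ioo u b) ?_ ?_ ?_
    fun v hv => abs_sub_le_zeroNorm_mul_rpow hg hu hv.1 hv.2
  · rw [closure_Ioo hub.ne]
    exact right_mem_Icc.2 hub.le
  · exact ((hgb.mono hsub).sub continuousWithinAt_const).abs
  · exact continuousWithinAt_const.mul <|
      (continuousWithinAt_id.sub continuousWithinAt_const).rpow_const
        (Or.inl (sub_ne_zero.2 hub.ne'))

lemma abs_setIntegral_le_zeroNorm (hg : zeroNorm α a b g ≠ ⊤) {x : ℝ} (hx : a ≤ x) :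
    |∫ u in Ioo x b, (g x - g u) / (u - x) ^ (2 - α)| ≤ (zeroNorm α a b g).toReal :=
  calc _ ≤ ∫ u in Ioo x b, |(g x - g u) / (u - x) ^ (2 - α)| := abs_integral_le_integral_abs
    _ = ∫ u in Ioo x b, |g x - g u| / (u - x) ^ (2 - α) :=
      setIntegral_congr_fun measurableSet_Ioo fun u hu => by
        rw [abs_div, abs_of_pos (Real.rpow_pos_of_pos (sub_pos.2 hu.1) _)]
    _ ≤ _ := setIntegral_Ioo_le_of_forall_lt ENNReal.toReal_nonneg fun v hv =>
      setIntegral_le_zeroNorm hg hx hv.1 hv.2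

lemma abs_fracDerivM_le (hα0 : 0 < α) (hα1 : α < 1) (hg : zeroNorm α a b g ≠ ⊤)
    (hgb : ContinuousWithinAt g (Icc a b) b) {x : ℝ} (hx : a ≤ x) (hxb : x < b) :
    |fracDerivM α b g x| ≤ 2 / Real.Gamma α * (zeroNorm α a b g).toReal := by
  set Λ := (zeroNorm α a b g).toReal
  have hbdry : |(g x - g b) / (b - x) ^ (1 - α)| ≤ Λ := by
    have hpow : 0 < (b - x) ^ (1 - α) := Real.rpow_pos_of_pos (sub_pos.2 hxb) _
    rw [abs_div, abs_of_pos hpow, div_le_iff₀ hpow, abs_sub_comm]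
    exact abs_sub_right_le_zeroNorm_mul_rpow hg hgb hx hxb
  have hint : |(1 - α) * ∫ u in Ioo x b, (g x - g u) / (u - x) ^ (2 - α)| ≤ Λ := by
    rw [abs_mul, abs_of_pos (sub_pos.2 hα1)]
    exact (mul_le_of_le_one_left (abs_nonneg _) (by linarith)).trans
      (abs_setIntegral_le_zeroNorm hg hx)
  rw [fracDerivM, abs_mul, abs_of_pos (one_div_pos.2 (Real.Gamma_pos_of_pos hα0))]
  calc _ ≤ 1 / Real.Gamma α * (Λ + Λ) := by
        gcongr
        exact (abs_add_le _ _).trans (add_le_add hbdry hint)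
    _ = _ := by ring

end ZeroNorm

section PathNorm

variable {α : ℝ} {X : ℝ → ℝ}

noncomputable def pathWeight (α : ℝ) (X : ℝ → ℝ) (s : ℝ) : ℝ≥0∞ :=
  ENNReal.ofReal (|X s| * s ^ (-α)) + pathNorm α X s

lemma measurable_pathNorm (hX : Measurable X) : Measurable (pathNorm α X) := by
  have hF : Measurable fun p : ℝ × ℝ => {q : ℝ × ℝ | 0 < q.2 ∧ q.2 < q.1}.indicator
      (fun q => ENNReal.ofReal (|X q.1 - X q.2| * (q.1 - q.2) ^ (-1 - α))) p :=
    (ENNReal.measurable_ofReal.comp (by fun_prop)).indicator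
      ((measurableSet_lt measurable_const measurable_snd).inter
        (measurableSet_lt measurable_snd measurable_fst))
  convert hF.lintegral_prod_right' (ν := volume) with s
  rw [pathNorm, ← lintegral_indicator measurableSet_Ioo]
  rfl

lemma measurable_pathWeight (hX : Measurable X) : Measurable (pathWeight α X) :=
  (ENNReal.measurable_ofReal.comp (by fun_prop)).add (measurable_pathNorm hX)

lemma integrableOn_pathNorm_integrand (hX : Measurable X) {x : ℝ} (hx : pathNorm α X x ≠ ⊤) :
    IntegrableOn (fun u => |X x - X u| * (x - u) ^ (-1 - α)) (Ioo 0 x) :=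
  ⟨by fun_prop, (hasFiniteIntegral_iff_ofReal (ae_restrict_of_forall_mem measurableSet_Ioo
    fun u hu => mul_nonneg (abs_nonneg _) (Real.rpow_nonneg (sub_pos.2 hu.2).le _))).2 hx.lt_top⟩

lemma integral_pathNorm_integrand (hX : Measurable X) (x : ℝ) :
    ∫ u in Ioo 0 x, |X x - X u| * (x - u) ^ (-1 - α) = (pathNorm α X x).toReal :=
  integral_eq_lintegral_of_nonneg_ae (ae_restrict_of_forall_mem measurableSet_Ioo
    fun u hu => mul_nonneg (abs_nonneg _) (Real.rpow_nonneg (sub_pos.2 hu.2).le _)) (by fun_prop)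

end PathNorm

section FracDerivP

variable {α β M x : ℝ} {f X : ℝ → ℝ}

lemma abs_setIntegral_fracDerivP_le (hαβ : α < β) (hX : Measurable X) (hx : 0 ≤ x)
    (hpN : pathNorm α X x ≠ ⊤)
    (hf : ∀ u ∈ Ioo 0 x, |f x - f u| ≤ M * ((x - u) ^ β + |X x - X u|)) :
    |∫ u in Ioo 0 x, (f x - f u) / (x - u) ^ (1 + α)|
      ≤ M * (x ^ (β - α) / (β - α) + (pathNorm α X x).toReal) := by
  have hs : -1 < β - α - 1 := by linarith
  have hbound : ∀ u ∈ Ioo 0 x, ‖(f x - f u) / (x - u) ^ (1 + α)‖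
      ≤ M * ((x - u) ^ (β - α - 1) + |X x - X u| * (x - u) ^ (-1 - α)) := fun u hu => by
    have hxu : 0 < x - u := sub_pos.2 hu.2
    have hsplit : (x - u) ^ (β - α - 1) = (x - u) ^ β * (x - u) ^ (-1 - α) := by
      rw [← Real.rpow_add hxu]; ring_nf
    rw [Real.norm_eq_abs, abs_div, abs_of_pos (Real.rpow_pos_of_pos hxu _), div_eq_mul_inv,
      ← Real.rpow_neg hxu.le, neg_add', hsplit]
    calc _ ≤ M * ((x - u) ^ β + |X x - X u|) * (x - u) ^ (-1 - α) :=
          mul_le_mul_of_nonneg_right (hf u hu) (Real.rpow_nonneg hxu.le _)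
      _ = _ := by ring
  calc _ ≤ ∫ u in Ioo 0 x, M * ((x - u) ^ (β - α - 1) + |X x - X u| * (x - u) ^ (-1 - α)) :=
        norm_integral_le_of_norm_le
          (((integrableOn_Ioo_sub_rpow hs hx).add
            (integrableOn_pathNorm_integrand hX hpN)).const_mul M)
          (ae_restrict_of_forall_mem measurableSet_Ioo hbound)
    _ = _ := by
      rw [integral_const_mul, integral_add (integrableOn_Ioo_sub_rpow hs hx)
        (integrableOn_pathNorm_integrand hX hpN), integral_Ioo_sub_rpow hs hx,
        integral_pathNorm_integrand hX, sub_add_cancel]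

lemma abs_fracDerivP_le (hα0 : 0 < α) (hα1 : α < 1) (hαβ : α < β) (hX : Measurable X)
    (hx : 0 < x) (hW : pathWeight α X x ≠ ⊤) (hf0 : |f x| ≤ M * (1 + |X x|))
    (hf : ∀ u ∈ Ioo 0 x, |f x - f u| ≤ M * ((x - u) ^ β + |X x - X u|)) :
    |fracDerivP α 0 f x|
      ≤ M / Real.Gamma (1 - α)
        * (x ^ (-α) + x ^ (β - α) / (β - α) + (pathWeight α X x).toReal) := by
  have hM : 0 ≤ M := nonneg_of_mul_nonneg_left ((abs_nonneg _).trans hf0) (by positivity)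
  have hpN : pathNorm α X x ≠ ⊤ := (ENNReal.add_ne_top.1 hW).2
  have hW' : (pathWeight α X x).toReal = |X x| * x ^ (-α) + (pathNorm α X x).toReal := by
    rw [pathWeight, ENNReal.toReal_add ENNReal.ofReal_ne_top hpN,
      ENNReal.toReal_ofReal (by positivity)]
  have hJ := abs_setIntegral_fracDerivP_le hαβ hX hx.le hpN hf
  have hbdry : |f x / (x - 0) ^ α| ≤ M * (1 + |X x|) * x ^ (-α) := by
    rw [sub_zero, abs_div, abs_of_pos (Real.rpow_pos_of_pos hx _), div_eq_mul_inv,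
      ← Real.rpow_neg hx.le]
    exact mul_le_mul_of_nonneg_right hf0 (Real.rpow_nonneg hx.le _)
  have hΓ : 0 < Real.Gamma (1 - α) := Real.Gamma_pos_of_pos (sub_pos.2 hα1)
  rw [fracDerivP, abs_mul, abs_of_pos (one_div_pos.2 hΓ), hW', div_eq_mul_one_div M, mul_comm M,
    mul_assoc]
  gcongr
  calc _ ≤ |f x / (x - 0) ^ α| + α * |∫ u in Ioo 0 x, (f x - f u) / (x - u) ^ (1 + α)| :=
        (abs_add_le _ _).trans_eq (by rw [abs_mul, abs_of_pos hα0])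
    _ ≤ M * (1 + |X x|) * x ^ (-α)
          + 1 * (M * (x ^ (β - α) / (β - α) + (pathNorm α X x).toReal)) := by
        gcongr
    _ = _ := by ring

end FracDerivP

lemma integrableOn_and_integral_rpow_add_pathWeight {α β t : ℝ} {X : ℝ → ℝ} (hα1 : α < 1)
    (hαβ : α < β) (ht : 0 ≤ t) (hX : Measurable X) (hW : ∫⁻ s in Ioo 0 t, pathWeight α X s ≠ ⊤) :
    IntegrableOn (fun x => x ^ (-α) + x ^ (β - α) / (β - α) + (pathWeight α X x).toReal)
        (Ioo 0 t) ∧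
      ∫ x in Ioo 0 t, (x ^ (-α) + x ^ (β - α) / (β - α) + (pathWeight α X x).toReal)
        = t ^ (1 - α) / (1 - α) + t ^ (β - α + 1) / ((β - α) * (β - α + 1))
          + (∫⁻ s in Ioo 0 t, pathWeight α X s).toReal := by
  have h₁ : -1 < -α := by linarith
  have h₂ : -1 < β - α := by linarith
  have hi₁ : IntegrableOn (fun x : ℝ => x ^ (-α)) (Ioo 0 t) :=
    (intervalIntegrable_iff_integrableOn_Ioo_of_le ht).1
      (intervalIntegral.intervalIntegrable_rpow' h₁)
  have hi₂ : IntegrableOn (fun x : ℝ => x ^ (β - α) / (β - α)) (Ioo 0 t) :=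
    ((intervalIntegrable_iff_integrableOn_Ioo_of_le ht).1
      (intervalIntegral.intervalIntegrable_rpow' h₂)).div_const _
  have hi₃ : IntegrableOn (fun x => (pathWeight α X x).toReal) (Ioo 0 t) :=
    integrable_toReal_of_lintegral_ne_top (measurable_pathWeight hX).aemeasurable hW
  refine ⟨(hi₁.add hi₂).add hi₃, ?_⟩
  rw [integral_add (f := fun x => x ^ (-α) + x ^ (β - α) / (β - α)) (hi₁.add hi₂) hi₃,
    integral_add hi₁ hi₂, integral_div, integral_Ioo_rpow h₁ ht, integral_Ioo_rpow h₂ ht,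
    integral_toReal (measurable_pathWeight hX).aemeasurable
      (ae_lt_top (measurable_pathWeight hX) hW), neg_add_eq_sub, div_div, mul_comm (β - α)]

section Measurability

variable {α a b : ℝ} {f g : ℝ → ℝ}

lemma Measurable.fracDerivP (hf : Measurable f) : Measurable (fracDerivP α a f) :=
  measurable_const.mul <| (by fun_prop : Measurable fun x => f x / (x - a) ^ α).add <|
    measurable_const.mul <| measurable_setIntegral_Ioo measurable_const measurable_id
      (F := fun x u => (f x - f u) / (x - u) ^ (1 + α)) (by fun_prop)

lemma Measurable.fracDerivM (hg : Measurable g) : Measurable (fracDerivM α b g) :=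
  measurable_const.mul <|
    (by fun_prop : Measurable fun x => (g x - g b) / (b - x) ^ (1 - α)).add <|
    measurable_const.mul <| measurable_setIntegral_Ioo measurable_id measurable_const
      (F := fun x u => (g x - g u) / (u - x) ^ (2 - α)) (by fun_prop)

lemma Set.EqOn.fracDerivP {f' : ℝ → ℝ} (h : EqOn f f' (Icc a b)) :
    EqOn (fracDerivP α a f) (fracDerivP α a f') (Ioc a b) := fun x hx => by
  have hIoo : EqOn f f' (Ioo a x) :=
    h.mono (Ioo_subset_Icc_self.trans (Icc_subset_Icc_right hx.2))
  rw [_root_.fracDerivP, _root_.fracDerivP, h (Ioc_subset_Icc_self hx),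
    setIntegral_congr_fun measurableSet_Ioo fun u hu => by rw [hIoo hu]]

lemma Set.EqOn.fracDerivM {g' : ℝ → ℝ} (h : EqOn g g' (Icc a b)) :
    EqOn (fracDerivM α b g) (fracDerivM α b g') (Icc a b) := fun x hx => by
  have hIoo : EqOn g g' (Ioo x b) :=
    h.mono (Ioo_subset_Icc_self.trans (Icc_subset_Icc_left hx.1))
  rw [_root_.fracDerivM, _root_.fracDerivM, h hx, h (right_mem_Icc.2 (hx.1.trans hx.2)),
    setIntegral_congr_fun measurableSet_Ioo fun u hu => by rw [hIoo hu]]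

end Measurability

lemma aestronglyMeasurable_fracDerivP_mul_fracDerivM {α β t M : ℝ} (ht : 0 ≤ t) (hβ : 0 < β)
    {c : ℝ → ℝ → ℝ} {g X : ℝ → ℝ}
    (hc : ∀ s ∈ Icc 0 t, ∀ u ∈ Icc 0 t, ∀ x y : ℝ, |c s x - c u y| ≤ M * (|s - u| ^ β + |x - y|))
    (hg : ContinuousOn g (Icc 0 t)) (hX : Measurable X) :
    AEStronglyMeasurable (fun x => fracDerivP α 0 (fun s => c s (X s)) x * fracDerivM α t g x)
      (volume.restrict (Ioo 0 t)) := by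
  set π : ℝ → ℝ := fun s => projIcc 0 t ht s
  have hπ : Continuous π := continuous_subtype_val.comp continuous_projIcc
  have hπmem : ∀ s, π s ∈ Icc 0 t := fun s => (projIcc 0 t ht s).2
  have hπeq : EqOn π id (Icc 0 t) := fun s hs => congrArg Subtype.val (projIcc_of_mem ht hs)
  have hf : Measurable fun s => c (π s) (X s) :=
    ((continuousOn_uncurry_of_abs_sub_le hβ hc).comp_continuous (hπ.prodMap continuous_id)
      fun p => ⟨hπmem p.1, mem_univ _⟩).measurable.comp (measurable_id.prodMk hX)
  have hg' : Measurable (g ∘ π) := (hg.comp_continuous hπ hπmem).measurable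
  refine ((hf.fracDerivP (α := α) (a := 0)).mul
    (hg'.fracDerivM (α := α) (b := t))).aestronglyMeasurable.congr <|
      ae_restrict_of_forall_mem measurableSet_Ioo fun x hx => ?_
  have hfeq : EqOn (fun s => c (π s) (X s)) (fun s => c s (X s)) (Icc 0 t) := fun s hs => by
    simp only [hπeq hs, id]
  have hgeq : EqOn (g ∘ π) g (Icc 0 t) := fun s hs => by simp only [Function.comp, hπeq hs, id]
  simp only [Pi.mul_apply]
  rw [hfeq.fracDerivP (Ioo_subset_Ioc_self hx), hgeq.fracDerivM (Ioo_subset_Icc_self hx)]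

lemma integrableOn_and_abs_glsIntegral_le {α β t M : ℝ} (hα0 : 0 < α) (hα1 : α < 1)
    (hαβ : α < β) (ht : 0 ≤ t) {c : ℝ → ℝ → ℝ} {g X : ℝ → ℝ}
    (hcb : ∀ s ∈ Icc 0 t, ∀ x : ℝ, |c s x| ≤ M * (1 + |x|))
    (hcl : ∀ s ∈ Icc 0 t, ∀ u ∈ Icc 0 t, ∀ x y : ℝ, |c s x - c u y| ≤ M * (|s - u| ^ β + |x - y|))
    (hgc : ContinuousOn g (Icc 0 t)) (hΛ : zeroNorm α 0 t g ≠ ⊤) (hX : Measurable X)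
    (hW : ∫⁻ s in Ioo 0 t, pathWeight α X s ≠ ⊤) :
    IntegrableOn (fun x => fracDerivP α 0 (fun s => c s (X s)) x * fracDerivM α t g x) (Ioo 0 t) ∧
      |glsIntegral α 0 t (fun s => c s (X s)) g|
        ≤ 2 / Real.Gamma α * (zeroNorm α 0 t g).toReal * (M / Real.Gamma (1 - α)
          * (t ^ (1 - α) / (1 - α) + t ^ (β - α + 1) / ((β - α) * (β - α + 1))
            + (∫⁻ s in Ioo 0 t, pathWeight α X s).toReal)) := by
  obtain ⟨hψ, hψint⟩ := integrableOn_and_integral_rpow_add_pathWeight hα1 hαβ ht hX hW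
  have hP : ∀ᵐ x ∂volume.restrict (Ioo 0 t), |fracDerivP α 0 (fun s => c s (X s)) x|
      ≤ M / Real.Gamma (1 - α)
        * (x ^ (-α) + x ^ (β - α) / (β - α) + (pathWeight α X x).toReal) := by
    filter_upwards [ae_restrict_mem measurableSet_Ioo,
      ae_lt_top' (measurable_pathWeight hX).aemeasurable hW] with x hx hWx
    refine abs_fracDerivP_le hα0 hα1 hαβ hX hx.1 hWx.ne (hcb x (Ioo_subset_Icc_self hx) _)
      fun u hu => ?_
    simpa only [abs_of_pos (sub_pos.2 hu.2)] using
      hcl x (Ioo_subset_Icc_self hx) u ⟨hu.1.le, hu.2.le.trans hx.2.le⟩ (X x) (X u)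
  have hQ : ∀ᵐ x ∂volume.restrict (Ioo 0 t),
      |fracDerivM α t g x| ≤ 2 / Real.Gamma α * (zeroNorm α 0 t g).toReal :=
    ae_restrict_of_forall_mem measurableSet_Ioo fun x hx =>
      abs_fracDerivM_le hα0 hα1 hΛ (hgc t (right_mem_Icc.2 ht)) hx.1.le hx.2
  obtain ⟨hint, hle⟩ := integrable_mul_and_abs_integral_le
    (aestronglyMeasurable_fracDerivP_mul_fracDerivM ht (hα0.trans hαβ) hcl hgc hX)
    (hψ.const_mul _) hP hQ
  rw [integral_const_mul, hψint] at hle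
  exact ⟨hint, hle⟩

theorem gls_integral_coeff_bound (α β t M : ℝ)
    (hα : α ∈ Set.Ioo (0 : ℝ) (1 / 2)) (hβ : β ∈ Set.Ioo α 1)
    (ht : 0 < t) (hM : 0 < M) :
    ∃ C : ℝ, 0 < C ∧ ∀ (c : ℝ → ℝ → ℝ) (g X : ℝ → ℝ),
      (∀ s ∈ Set.Icc 0 t, ∀ x : ℝ, |c s x| ≤ M * (1 + |x|)) →
      (∀ s ∈ Set.Icc 0 t, ∀ u ∈ Set.Icc 0 t, ∀ x y : ℝ,
        |c s x - c u y| ≤ M * (|s - u| ^ β + |x - y|)) →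
      ContinuousOn g (Set.Icc 0 t) →
      zeroNorm α 0 t g < ⊤ →
      Measurable X →
      (∫⁻ s in Ioo (0 : ℝ) t,
          (ENNReal.ofReal (|X s| * s ^ (-α)) + pathNorm α X s)) < ⊤ →
      IntegrableOn
          (fun x => fracDerivP α 0 (fun s => c s (X s)) x * fracDerivM α t g x)
          (Ioo 0 t) ∧
        |glsIntegral α 0 t (fun s => c s (X s)) g| ≤
          C * (zeroNorm α 0 t g).toReal *
            (1 + (∫⁻ s in Ioo (0 : ℝ) t,
              (ENNReal.ofReal (|X s| * s ^ (-α)) + pathNorm α X s)).toReal) := by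
  obtain ⟨hα0, hα2⟩ := hα
  obtain ⟨hαβ, -⟩ := hβ
  have hα1 : α < 1 := by linarith
  set K := t ^ (1 - α) / (1 - α) + t ^ (β - α + 1) / ((β - α) * (β - α + 1))
  have hK : 0 ≤ K := by
    have := sub_pos.2 hα1
    have := sub_pos.2 hαβ
    positivity
  have hΓ := Real.Gamma_pos_of_pos hα0
  have hΓ' := Real.Gamma_pos_of_pos (sub_pos.2 hα1)
  refine ⟨2 / Real.Gamma α * (M / Real.Gamma (1 - α)) * (K + 1), by positivity,
    fun c g X hcb hcl hgc hΛ hX hW => ?_⟩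
  change _ ∧ _ ≤ _ * (1 + (∫⁻ s in Ioo 0 t, pathWeight α X s).toReal)
  obtain ⟨hint, hle⟩ :=
    integrableOn_and_abs_glsIntegral_le hα0 hα1 hαβ ht.le hcb hcl hgc hΛ.ne hX hW.ne
  refine ⟨hint, hle.trans ?_⟩
  set A := (∫⁻ s in Ioo 0 t, pathWeight α X s).toReal
  have hKA : K + A ≤ (K + 1) * (1 + A) := by nlinarith [show 0 ≤ A from ENNReal.toReal_nonneg]
  calc _ = 2 / Real.Gamma α * (M / Real.Gamma (1 - α)) * (zeroNorm α 0 t g).toReal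
        * (K + A) := by ring
    _ ≤ 2 / Real.Gamma α * (M / Real.Gamma (1 - α)) * (zeroNorm α 0 t g).toReal
        * ((K + 1) * (1 + A)) := by gcongr
    _ = _ := by ring
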